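/- Let $R$ be a one-dimensional local Cohen–Macaulay ring with canonical module $\omega_R$, and let $I$ be an ideal with $\operatorname{ht} I > 0$. If $I^i I^{-n} = a^i I^{-n}$ for some $a \in I$ and some positive integers $i$ and $n$, and $I^{r-1} \cong \omega_R$ for some positive integer $r$, then $I^{r+n} = a I^{r+n-1}$. -/

import Mathlib

/-- `J` is a reduction of `I`. -/
def Ideal.IsReduction {R : Type*} [CommRing R] (J I : Ideal R) : Prop :=
  J ≤ I ∧ ∃ n : ℕ, I ^ (n + 1) = J * I ^ n

/-- The reduction number of `I` with respect to `J`. -/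
noncomputable def Ideal.reductionNumber {R : Type*} [CommRing R] (J I : Ideal R) : ℕ :=
  sInf {n : ℕ | I ^ (n + 1) = J * I ^ n}

/-- `J` is a minimal reduction of `I`. -/
def Ideal.IsMinimalReduction {R : Type*} [CommRing R] (J I : Ideal R) : Prop :=
  J.IsReduction I ∧ ∀ K : Ideal R, K.IsReduction I → K ≤ J → K = J

/-- The core of `I`: the intersection of all reductions of `I`. -/
noncomputable def Ideal.core {R : Type*} [CommRing R] (I : Ideal R) : Ideal R :=
  sInf {J : Ideal R | J.IsReduction I}

/-- The reduction number `r(I)`: the minimum of `r_J(I)` over minimal reductions `J`. -/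
noncomputable def Ideal.redNum {R : Type*} [CommRing R] (I : Ideal R) : ℕ :=
  sInf {n : ℕ | ∃ J : Ideal R, J.IsMinimalReduction I ∧ J.reductionNumber I = n}

/-- The height of an ideal: the infimum of the heights of primes containing it. -/
noncomputable def idealHeight {R : Type*} [CommRing R] (I : Ideal R) : ℕ∞ :=
  ⨅ p ∈ {p : PrimeSpectrum R | I ≤ p.asIdeal}, Order.height p

/-- A regular sequence in `R`. -/
def IsRegularSeq (R : Type*) [CommRing R] (rs : List R) : Prop :=
  Ideal.span {x | x ∈ rs} ≠ ⊤ ∧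
    ∀ (i : ℕ) (h : i < rs.length) (x : R),
      rs.get ⟨i, h⟩ * x ∈ Ideal.span {y | y ∈ rs.take i} →
        x ∈ Ideal.span {y | y ∈ rs.take i}

/-- A Cohen–Macaulay local ring: a local ring admitting a regular sequence of nonunits
whose length equals the Krull dimension. -/
def IsCohenMacaulayLocalRing (R : Type*) [CommRing R] : Prop :=
  IsLocalRing R ∧ ∃ rs : List R, (∀ r ∈ rs, ¬ IsUnit r) ∧ IsRegularSeq R rs ∧
    (rs.length : WithBot ℕ∞) = ringKrullDim R

/-- A Cohen–Macaulay ring: all localizations at maximal ideals are Cohen–Macaulay local. -/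
def IsCohenMacaulayRing (A : Type*) [CommRing A] : Prop :=
  ∀ (p : Ideal A) (hp : p.IsPrime), p.IsMaximal →
    IsCohenMacaulayLocalRing (Localization (@Ideal.primeCompl A _ p hp))

/-- The associated graded ring `gr_I(R) = R[It]/I·R[It]`. -/
noncomputable def assocGradedRing {R : Type*} [CommRing R] (I : Ideal R) :=
  (reesAlgebra I) ⧸ (Ideal.map (algebraMap R (reesAlgebra I)) I)

noncomputable instance {R : Type*} [CommRing R] (I : Ideal R) :
    CommRing (assocGradedRing I) :=
  inferInstanceAs (CommRing ((reesAlgebra I) ⧸ (Ideal.map (algebraMap R (reesAlgebra I)) I)))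

/-- The image of an ideal in the total ring of fractions. -/
noncomputable def toFrac {R : Type*} [CommRing R] (I : Ideal R) :
    Submodule R (FractionRing R) :=
  Submodule.map (Algebra.linearMap R (FractionRing R)) I

/-- The inverse fractional ideal `I^{-n} = R :_{Q(R)} I^n`. -/
noncomputable def invPow {R : Type*} [CommRing R] (I : Ideal R) (n : ℕ) :
    Submodule R (FractionRing R) :=
  (1 : Submodule R (FractionRing R)) / toFrac (I ^ n)

/-- `ω` is a canonical ideal of the one-dimensional Cohen–Macaulay local ring `R`:
a regular fractional ideal such that double-dualizing into `ω` fixes every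
regular fractional ideal. -/
def IsCanonicalIdeal (R : Type*) [CommRing R] (ω : Submodule R (FractionRing R)) : Prop :=
  ω.FG ∧ (∃ x ∈ ω, IsUnit x) ∧
    ∀ F : Submodule R (FractionRing R), F.FG → (∃ x ∈ F, IsUnit x) → ω / (ω / F) = F

/-!
A non-zerodivisor `b ∈ I` (which exists because `R` is Cohen–Macaulay of dimension one and
`ht I > 0`) lies in `I^i I^{-n} = a^i I^{-n}`, so `a` becomes a unit `u` of `Q(R)`; the
hypothesis then pins down `I^{-(n+1)} = u⁻¹ I^{-n}`. An isomorphism `I^{r-1} ≅ ω` of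
fractional ideals is multiplication by a unit `c`, so `ω : I^{r-1} = c R` and
`ω : I^{r-1+k} = c I^{-k}`; canonical duality then gives `I^{r-1+k} = c⁻¹ (ω : I^{-k})`.
Comparing `k = n + 1` with `k = n` yields `I^{r+n} = a I^{r+n-1}`.
-/

open Pointwise
open scoped nonZeroDivisors

namespace Submodule

variable {R A : Type*} [CommRing R] [CommRing A] [Algebra R A]

protected theorem div_one (F : Submodule R A) : F / 1 = F := by
  ext x
  simp only [mem_div_iff_forall_mul_mem, mem_one]
  refine ⟨fun h ↦ by simpa using h 1 ⟨1, map_one _⟩, ?_⟩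
  rintro hx _ ⟨r, rfl⟩
  rw [mul_comm, ← Algebra.smul_def]
  exact F.smul_mem r hx

theorem div_mul_eq_div_div (F G H : Submodule R A) : F / (G * H) = F / G / H :=
  eq_of_forall_le_iff fun K ↦ by simp only [le_div_iff_mul_le, mul_assoc, mul_comm H G]

theorem mem_unit_smul_iff {u : Aˣ} {S : Submodule R A} {x : A} :
    x ∈ u • S ↔ ↑u⁻¹ * x ∈ S :=
  show x ∈ u • (S : Set A) ↔ _ from Set.mem_smul_set_iff_inv_smul_mem

theorem unit_smul_div (u : Aˣ) (F G : Submodule R A) : (u • F) / G = u • (F / G) := by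
  ext x
  simp only [mem_unit_smul_iff, mem_div_iff_forall_mul_mem, mul_assoc]

theorem div_unit_smul (u : Aˣ) (F G : Submodule R A) : F / (u • G) = u⁻¹ • (F / G) := by
  ext x
  simp only [mem_unit_smul_iff, mem_div_iff_forall_mul_mem, inv_inv]
  constructor
  · intro h y hy
    simpa [mul_assoc, mul_left_comm] using h (u * y) (by simpa using hy)
  · intro h y hy
    simpa [mul_assoc, mul_left_comm] using h _ hy

theorem unit_smul_mul (u : Aˣ) (M N : Submodule R A) : (u • M) * N = u • (M * N) := by
  change ((u : A) • M) * N = (u : A) • (M * N)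
  rw [← span_singleton_mul, ← span_singleton_mul, mul_assoc]

theorem unit_smul_mono (u : Aˣ) {M N : Submodule R A} (h : M ≤ N) : u • M ≤ u • N :=
  map_mono h

theorem mul_unit_smul (u : Aˣ) (M N : Submodule R A) : M * (u • N) = u • (M * N) := by
  rw [mul_comm, unit_smul_mul, mul_comm]

theorem exists_unit_smul_eq_of_linearEquiv (M : Submonoid R) [IsLocalization M A]
    {F G : Submodule R A} (e : F ≃ₗ[R] G) {t : R} (htF : algebraMap R A t ∈ F)
    (ht : IsUnit (algebraMap R A t)) (hG : ∃ y ∈ G, IsUnit y) : ∃ c : Aˣ, G = c • F := by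
  set τ : F := ⟨_, htF⟩
  set c : A := (e τ : A) * ↑ht.unit⁻¹
  have he : ∀ x : F, (e x : A) = c * x := by
    intro x
    -- clear the denominator `s ∈ M` of `x` and compare `e` on `(t * s) • x = r • τ`
    obtain ⟨⟨r, s⟩, hs⟩ := IsLocalization.surj M (x : A)
    have hx : (t * s) • x = r • τ := by
      ext
      simp only [SetLike.val_smul, Algebra.smul_def, map_mul, τ]
      rw [← hs]; ring
    have hex : algebraMap R A t * algebraMap R A s * e x = algebraMap R A r * e τ := by
      simpa [Algebra.smul_def] using congrArg (fun y : F ↦ (e y : A)) hx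
    have hcancel : algebraMap R A s * (algebraMap R A t * e x) = algebraMap R A s * (x * e τ) := by
      rw [← mul_assoc, mul_comm (algebraMap R A s), hex, ← hs]; ring
    have := (IsLocalization.map_units A s).mul_left_cancel hcancel
    calc (e x : A) = ↑ht.unit⁻¹ * (algebraMap R A t * e x) := by simp [← mul_assoc]
      _ = c * x := by rw [this]; ring
  obtain ⟨y, hyG, hy⟩ := hG
  have hc : IsUnit c := by
    refine isUnit_of_mul_isUnit_left (y := ((e.symm ⟨y, hyG⟩ : F) : A)) ?_
    rwa [← he, LinearEquiv.apply_symm_apply]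
  refine ⟨hc.unit, le_antisymm (fun z hz ↦ ?_) (fun z hz ↦ ?_)⟩
  · have hz' := he (e.symm ⟨z, hz⟩)
    rw [LinearEquiv.apply_symm_apply] at hz'
    rw [mem_unit_smul_iff, show z = _ from hz', ← mul_assoc, hc.val_inv_mul, one_mul]
    exact (e.symm ⟨z, hz⟩).2
  · rw [mem_unit_smul_iff] at hz
    have hz' := he ⟨_, hz⟩
    rw [← mul_assoc, hc.mul_val_inv, one_mul] at hz'
    exact hz' ▸ (e ⟨_, hz⟩).2

end Submodule

section Canonical

variable {R : Type*} [CommRing R] {ω : Submodule R (FractionRing R)}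

theorem IsCanonicalIdeal.div_self (hω : IsCanonicalIdeal R ω) : ω / ω = 1 := by
  simpa [Submodule.div_one] using hω.2.2 1 ⟨{1}, by simp [Submodule.one_eq_span]⟩
    ⟨1, Submodule.mem_one.2 ⟨1, map_one _⟩, isUnit_one⟩

theorem IsCanonicalIdeal.mul_eq_smul_div_one_div (hω : IsCanonicalIdeal R ω)
    {c : (FractionRing R)ˣ} {J F : Submodule R (FractionRing R)} (hc : ω = c • J)
    (hfg : (J * F).FG) (hunit : ∃ x ∈ J * F, IsUnit x) : J * F = c⁻¹ • (ω / (1 / F)) := by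
  have hJ : J = c⁻¹ • ω := by rw [hc, inv_smul_smul]
  have hdual : ω / (J * F) = c • (1 / F) := by
    rw [Submodule.div_mul_eq_div_div, hJ, Submodule.div_unit_smul, inv_inv, hω.div_self,
      Submodule.unit_smul_div]
  rw [← hω.2.2 _ hfg hunit, hdual, Submodule.div_unit_smul]

end Canonical

section InversePowers

variable {R : Type*} [CommRing R]

theorem toFrac_mul (I J : Ideal R) : toFrac (I * J) = toFrac I * toFrac J :=
  Submodule.map_mul I J (Algebra.ofId R (FractionRing R))

theorem toFrac_pow_add (I : Ideal R) (j k : ℕ) :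
    toFrac (I ^ (j + k)) = toFrac (I ^ j) * toFrac (I ^ k) := by
  rw [pow_add, toFrac_mul]

theorem algebraMap_mem_toFrac_iff {I : Ideal R} {x : R} :
    algebraMap R (FractionRing R) x ∈ toFrac I ↔ x ∈ I := by
  refine ⟨?_, Submodule.mem_map_of_mem⟩
  rintro ⟨y, hy, hyx⟩
  rwa [← IsFractionRing.injective R (FractionRing R) hyx]

theorem toFrac_injective : Function.Injective (toFrac (R := R)) := fun I J h ↦ by
  ext x
  rw [← algebraMap_mem_toFrac_iff, h, algebraMap_mem_toFrac_iff]

theorem toFrac_span_singleton (t : R) :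
    toFrac (Ideal.span {t}) = Submodule.span R {algebraMap R (FractionRing R) t} := by
  rw [toFrac, Ideal.span, Submodule.map_span, Set.image_singleton]
  rfl

theorem toFrac_fg [IsNoetherianRing R] (I : Ideal R) : (toFrac I).FG :=
  (IsNoetherian.noetherian I).map _

theorem exists_isUnit_mem_toFrac_pow {I : Ideal R} {b : R} (hbI : b ∈ I) (hb : b ∈ R⁰)
    (k : ℕ) : ∃ x ∈ toFrac (I ^ k), IsUnit x :=
  ⟨_, algebraMap_mem_toFrac_iff.2 (Ideal.pow_mem_pow hbI k),
    IsLocalization.map_units (FractionRing R) ⟨b ^ k, pow_mem hb k⟩⟩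

theorem one_mem_invPow (I : Ideal R) (k : ℕ) : 1 ∈ invPow I k :=
  Submodule.one_mem_div.2 <|
    Submodule.one_eq_range (R := R) (A := FractionRing R) ▸ LinearMap.map_le_range

theorem le_invPow_iff {I : Ideal R} {k : ℕ} {M : Submodule R (FractionRing R)} :
    M ≤ invPow I k ↔ M * toFrac (I ^ k) ≤ 1 :=
  Submodule.le_div_iff_mul_le

theorem invPow_mul_toFrac_pow_le_one (I : Ideal R) (k : ℕ) : invPow I k * toFrac (I ^ k) ≤ 1 :=
  Submodule.le_div_iff_mul_le.1 le_rfl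

theorem algebraMap_pow_smul_toFrac_pow_le {I : Ideal R} {a : R} (ha : a ∈ I) (j k : ℕ) :
    algebraMap R (FractionRing R) a ^ j • toFrac (I ^ k) ≤ toFrac (I ^ (j + k)) := by
  rw [toFrac_pow_add, ← map_pow, ← Submodule.span_singleton_mul]
  exact mul_le_mul_left ((Submodule.span_singleton_le_iff_mem _ _).2
    (algebraMap_mem_toFrac_iff.2 (Ideal.pow_mem_pow ha j))) _

theorem isUnit_algebraMap_of_toFrac_pow_mul_invPow_eq {I : Ideal R} {a b : R} (hbI : b ∈ I)
    (hb : b ∈ R⁰) {i n : ℕ} (hi : i ≠ 0)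
    (hyp : toFrac (I ^ i) * invPow I n = toFrac (Ideal.span {a ^ i}) * invPow I n) :
    IsUnit (algebraMap R (FractionRing R) a) := by
  have hbi : algebraMap R (FractionRing R) (b ^ i) ∈ toFrac (I ^ i) * invPow I n := by
    simpa using Submodule.mul_mem_mul (algebraMap_mem_toFrac_iff.2 (Ideal.pow_mem_pow hbI i))
      (one_mem_invPow I n)
  rw [hyp, toFrac_span_singleton, Submodule.mem_span_singleton_mul] at hbi
  obtain ⟨z, -, hz⟩ := hbi
  have hunit : IsUnit (algebraMap R (FractionRing R) (a ^ i) * z) :=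
    hz ▸ IsLocalization.map_units (FractionRing R) ⟨b ^ i, pow_mem hb i⟩
  rw [map_pow] at hunit
  exact (isUnit_pow_iff hi).1 (isUnit_of_mul_isUnit_left hunit)

theorem unit_smul_invPow_succ {I : Ideal R} {a : R} (ha : a ∈ I) {u : (FractionRing R)ˣ}
    (hu : (u : FractionRing R) = algebraMap R (FractionRing R) a) {i n : ℕ} (hi : i ≠ 0)
    (hyp : toFrac (I ^ i) * invPow I n = toFrac (Ideal.span {a ^ i}) * invPow I n) :
    u • invPow I (n + 1) = invPow I n := by
  have hshift (j k : ℕ) : u ^ j • toFrac (I ^ k) ≤ toFrac (I ^ (j + k)) := by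
    change ((u ^ j : (FractionRing R)ˣ) : FractionRing R) • toFrac (I ^ k) ≤ _
    rw [Units.val_pow_eq_pow_val, hu]
    exact algebraMap_pow_smul_toFrac_pow_le ha j k
  have hyp' : toFrac (I ^ i) * invPow I n = u ^ i • invPow I n := by
    rw [hyp, toFrac_span_singleton, Submodule.span_singleton_mul, map_pow, ← hu]
    rfl
  obtain ⟨j, rfl⟩ : ∃ j, i = j + 1 := ⟨i - 1, by omega⟩
  refine le_antisymm ?_ ?_
  · rw [le_invPow_iff, Submodule.unit_smul_mul, ← Submodule.mul_unit_smul]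
    calc invPow I (n + 1) * (u • toFrac (I ^ n))
        ≤ invPow I (n + 1) * toFrac (I ^ (1 + n)) := by
          simpa only [pow_one] using mul_le_mul_right (hshift 1 n) (invPow I (n + 1))
      _ ≤ 1 := by rw [Nat.add_comm 1 n]; exact invPow_mul_toFrac_pow_le_one I (n + 1)
  · have hdiv : u • invPow I (n + 1) = 1 / (u⁻¹ • toFrac (I ^ (n + 1))) := by
      rw [Submodule.div_unit_smul, inv_inv]; rfl
    rw [hdiv, Submodule.le_div_iff_mul_le]
    -- split `u⁻¹ = u^{-i} u^{i-1}`, absorb `u^{i-1}` into `I^{n+1}`, and cancel `u^{-i}`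
    -- against `I^i I^{-n} = u^i I^{-n}`
    calc invPow I n * (u⁻¹ • toFrac (I ^ (n + 1)))
        = (u ^ (j + 1))⁻¹ • (invPow I n * (u ^ j • toFrac (I ^ (n + 1)))) := by
          rw [Submodule.mul_unit_smul, Submodule.mul_unit_smul, smul_smul, pow_succ]; group
      _ ≤ (u ^ (j + 1))⁻¹ • (invPow I n * toFrac (I ^ (j + (n + 1)))) :=
          Submodule.unit_smul_mono _ (mul_le_mul_right (hshift j (n + 1)) _)
      _ = (u ^ (j + 1))⁻¹ • (toFrac (I ^ (j + 1)) * invPow I n * toFrac (I ^ n)) := by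
          rw [show j + (n + 1) = j + 1 + n by omega, toFrac_pow_add]; ac_rfl
      _ = invPow I n * toFrac (I ^ n) := by
          rw [hyp', Submodule.unit_smul_mul, inv_smul_smul]
      _ ≤ 1 := invPow_mul_toFrac_pow_le_one I n

end InversePowers

section LocalRing

variable {R : Type*} [CommRing R] [IsLocalRing R]

theorem IsCohenMacaulayLocalRing.exists_mem_maximalIdeal_mem_nonZeroDivisors
    (hCM : IsCohenMacaulayLocalRing R) (hdim : 0 < ringKrullDim R) :
    ∃ x ∈ IsLocalRing.maximalIdeal R, x ∈ R⁰ := by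
  obtain ⟨-, rs, hnu, hreg, hlen⟩ := hCM
  have hpos : 0 < rs.length := by
    rw [← hlen] at hdim
    exact_mod_cast hdim
  refine ⟨rs.get ⟨0, hpos⟩,
    (IsLocalRing.mem_maximalIdeal _).2 (hnu _ (List.get_mem _ _)), ?_⟩
  refine mem_nonZeroDivisors_iff_right.2 fun z hz ↦ ?_
  simpa using hreg.2 0 hpos z (by simpa [mul_comm z] using hz)

theorem eq_maximalIdeal_of_idealHeight_pos (hdim : ringKrullDim R ≤ 1) {I p : Ideal R}
    [hp : p.IsPrime] (hht : 0 < idealHeight I) (hIp : I ≤ p) :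
    p = IsLocalRing.maximalIdeal R := by
  by_contra hne
  have hmin : IsMin (⟨p, hp⟩ : PrimeSpectrum R) :=
    Order.krullDim_le_one_iff_forall_isMin.1 hdim _ fun h ↦ hne (congrArg PrimeSpectrum.asIdeal h)
  have hle : idealHeight I ≤ Order.height (⟨p, hp⟩ : PrimeSpectrum R) :=
    iInf₂_le (f := fun q (_ : q ∈ {q : PrimeSpectrum R | I ≤ q.asIdeal}) ↦ Order.height q)
      _ hIp
  rw [Order.height_eq_zero.2 hmin] at hle
  exact hht.ne' (le_antisymm hle bot_le)

theorem maximalIdeal_le_radical_of_idealHeight_pos (hdim : ringKrullDim R ≤ 1) {I : Ideal R}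
    (hht : 0 < idealHeight I) : IsLocalRing.maximalIdeal R ≤ I.radical := by
  rw [Ideal.radical_eq_sInf]
  exact le_sInf fun p ⟨hIp, _⟩ ↦ (eq_maximalIdeal_of_idealHeight_pos hdim hht hIp).ge

theorem exists_mem_nonZeroDivisors_of_idealHeight_pos [IsNoetherianRing R]
    (hCM : IsCohenMacaulayLocalRing R) (hdim : ringKrullDim R = 1) {I : Ideal R}
    (hht : 0 < idealHeight I) : ∃ b ∈ I, b ∈ R⁰ := by
  obtain ⟨x, hxm, hx⟩ := hCM.exists_mem_maximalIdeal_mem_nonZeroDivisors (by simp [hdim])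
  obtain ⟨k, hk⟩ := Ideal.exists_pow_le_of_le_radical_of_fg
    (maximalIdeal_le_radical_of_idealHeight_pos hdim.le hht) (IsNoetherian.noetherian _)
  exact ⟨x ^ k, hk (Ideal.pow_mem_pow hxm k), pow_mem hx k⟩

end LocalRing

theorem stmt0_general {R : Type*} [CommRing R] [IsLocalRing R] [IsNoetherianRing R]
    (hdim : ringKrullDim R = 1) (hCM : IsCohenMacaulayLocalRing R)
    (ω : Submodule R (FractionRing R)) (hω : IsCanonicalIdeal R ω)
    (I : Ideal R) (hht : 0 < idealHeight I)
    (a : R) (ha : a ∈ I) (i n r : ℕ) (hi : 0 < i) (hr : 0 < r)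
    (hyp : toFrac (I ^ i) * invPow I n = toFrac (Ideal.span {a ^ i}) * invPow I n)
    (hiso : Nonempty (↥(toFrac (I ^ (r - 1))) ≃ₗ[R] ↥ω)) :
    I ^ (r + n) = Ideal.span {a} * I ^ (r + n - 1) := by
  obtain ⟨b, hbI, hb⟩ := exists_mem_nonZeroDivisors_of_idealHeight_pos hCM hdim hht
  have hα := isUnit_algebraMap_of_toFrac_pow_mul_invPow_eq hbI hb hi.ne' hyp
  have hN : invPow I (n + 1) = hα.unit⁻¹ • invPow I n := by
    rw [← unit_smul_invPow_succ ha hα.unit_spec hi.ne' hyp, inv_smul_smul]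
  obtain ⟨c, hc⟩ := Submodule.exists_unit_smul_eq_of_linearEquiv R⁰ hiso.some
    (algebraMap_mem_toFrac_iff.2 (Ideal.pow_mem_pow hbI (r - 1)))
    (IsLocalization.map_units _ ⟨b ^ (r - 1), pow_mem hb _⟩) hω.2.1
  have hdual (k : ℕ) : toFrac (I ^ (r - 1 + k)) = c⁻¹ • (ω / invPow I k) := by
    rw [toFrac_pow_add]
    exact hω.mul_eq_smul_div_one_div hc (toFrac_pow_add I _ k ▸ toFrac_fg _)
      (toFrac_pow_add I _ k ▸ exists_isUnit_mem_toFrac_pow hbI hb _)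
  apply toFrac_injective
  rw [toFrac_mul, toFrac_span_singleton, Submodule.span_singleton_mul,
    show r + n - 1 = r - 1 + n by omega, show r + n = r - 1 + (n + 1) by omega, hdual, hdual, hN,
    Submodule.div_unit_smul, inv_inv, smul_smul, mul_comm, ← smul_smul]
  rfl

/-- Let `R` be a one-dimensional local Cohen–Macaulay ring with canonical
module `ω_R`, and `I` an ideal with `ht I > 0`. If `I^i I^{-n} = a^i I^{-n}` for some
`a ∈ I` and positive integers `i, n`, and `I^(r-1) ≅ ω_R` for some positive `r`,
then `I^(r+n) = a I^(r+n-1)`. -/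
theorem stmt0 {R : Type*} [CommRing R] [IsLocalRing R] [IsNoetherianRing R]
    (hdim : ringKrullDim R = 1) (hCM : IsCohenMacaulayLocalRing R)
    (ω : Submodule R (FractionRing R)) (hω : IsCanonicalIdeal R ω)
    (I : Ideal R) (hht : 0 < idealHeight I)
    (a : R) (ha : a ∈ I) (i n r : ℕ) (hi : 0 < i) (hn : 0 < n) (hr : 0 < r)
    (hyp : toFrac (I ^ i) * invPow I n = toFrac (Ideal.span {a ^ i}) * invPow I n)
    (hiso : Nonempty (↥(toFrac (I ^ (r - 1))) ≃ₗ[R] ↥ω)) :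
    I ^ (r + n) = Ideal.span {a} * I ^ (r + n - 1) :=
  stmt0_general hdim hCM ω hω I hht a ha i n r hi hr hyp hiso
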